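/- Let X be a ℂ-vector space and S, K : X → X linear maps with S invertible and (λI − K) invertible for λ = (γ_c+1)/(2(γ_c−1)), γ_c ≠ 1. Then the block operator M = [[S, −S],[(1/2)I + K, −γ_c(−(1/2)I + K)]] on X × X is invertible with inverse (1/(γ_c−1))·[[γ_c(λI−K)^{-1}((1/2)I−K)S^{-1}, (λI−K)^{-1}],[−(λI−K)^{-1}((1/2)I+K)S^{-1}, (λI−K)^{-1}]], i.e., multiplying M by this matrix on either side yields the identity on X × X. -/
import Mathlib

theorem block_operator_inverse (X : Type*) [AddCommGroup X] [Module ℂ X]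
    (γc : ℝ) (hγ : γc ≠ 1) (S K Sinv Rinv : X →ₗ[ℂ] X)
    (hS1 : ∀ x, S (Sinv x) = x) (hS2 : ∀ x, Sinv (S x) = x)
    (hR1 : ∀ x, (((γc + 1) / (2 * (γc - 1)) : ℝ) : ℂ) • Rinv x - K (Rinv x) = x)
    (hR2 : ∀ x, Rinv ((((γc + 1) / (2 * (γc - 1)) : ℝ) : ℂ) • x - K x) = x)
    (M N : X × X → X × X)
    (hM : ∀ p : X × X, M p =
      (S p.1 - S p.2,
       (1/2 : ℂ) • p.1 + K p.1 - (γc : ℂ) • (-((1/2 : ℂ) • p.2) + K p.2)))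
    (hN : ∀ p : X × X, N p =
      ((1 / ((γc : ℂ) - 1)) •
        (((γc : ℂ) • Rinv ((1/2 : ℂ) • Sinv p.1 - K (Sinv p.1)) + Rinv p.2,
          -(Rinv ((1/2 : ℂ) • Sinv p.1 + K (Sinv p.1))) + Rinv p.2) : X × X))) :
    ∀ p : X × X, M (N p) = p ∧ N (M p) = p := by
  have hg1 : (γc : ℂ) - 1 ≠ 0 := sub_ne_zero.mpr (by exact_mod_cast hγ)
  set l : ℂ := (((γc + 1) / (2 * (γc - 1)) : ℝ) : ℂ) with hl
  have hlval : l = ((γc : ℂ) + 1) / (2 * ((γc : ℂ) - 1)) := by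
    rw [hl]; push_cast; ring
  have hcomm : ∀ x, Rinv (K x) = K (Rinv x) := by
    intro x
    have h := hR2 (K (Rinv x))
    rw [← map_smul, ← map_sub, hR1 x] at h
    exact h
  intro p
  obtain ⟨a, b⟩ := p
  refine ⟨Prod.ext ?_ ?_, Prod.ext ?_ ?_⟩
  · simp only [hM, hN, Prod.smul_fst, Prod.smul_snd, map_add, map_sub, map_smul, map_neg,
      smul_add, smul_sub, smul_neg, smul_smul, hcomm, hS2]
    conv_rhs => rw [← hS1 a, ← hR1 (Sinv a)]
    simp only [map_sub, map_smul, hcomm]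
    match_scalars <;> (try rw [hlval]) <;> field_simp <;> first | ring1 | exact Or.inl (by ring)
  · simp only [hM, hN, Prod.smul_fst, Prod.smul_snd, map_add, map_sub, map_smul, map_neg,
      smul_add, smul_sub, smul_neg, smul_smul, hcomm, hS2]
    conv_rhs => rw [← hR1 b]
    match_scalars <;> (try rw [hlval]) <;> field_simp <;> first | ring1 | exact Or.inl (by ring)
  · simp only [hM, hN, Prod.smul_fst, Prod.smul_snd, map_add, map_sub, map_smul, map_neg,
      smul_add, smul_sub, smul_neg, smul_smul, hcomm, hS2]
    conv_rhs => rw [← hR1 a]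
    match_scalars <;> (try rw [hlval]) <;> field_simp <;> first | ring1 | exact Or.inl (by ring)
  · simp only [hM, hN, Prod.smul_fst, Prod.smul_snd, map_add, map_sub, map_smul, map_neg,
      smul_add, smul_sub, smul_neg, smul_smul, hcomm, hS2]
    conv_rhs => rw [← hR1 b]
    match_scalars <;> (try rw [hlval]) <;> field_simp <;> first | ring1 | exact Or.inl (by ring)
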